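/- (Tree lower bound validity.) Let U ⊆ V and let T be any spanning forest (acyclic undirected graph) on U. Then Σ_{{i,j}∈T} F_{ij} + Σ_{u∈U} ŝ(u,∅) ≤ S*(U | V\U), where F_{ij} = ŝ(i,{j}) + ŝ(j,∅) − ŝ(i,∅) − ŝ(j,∅), assuming pairwise score-equivalence ŝ(i,{j}) + ŝ(j,∅) = ŝ(j,{i}) + ŝ(i,∅) and that F_{ij} ≥ 0 for edges of T. That is, the best tree-structured network score on U is a lower bound on the optimal unconstrained order score of U. -/

import Mathlib

open Finset

noncomputable def shat {V : Type*} [DecidableEq V] (σ : V → Finset V → ℝ) (v : V) (S : Finset V) : ℝ :=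
  S.powerset.sup' S.powerset_nonempty (σ v)

noncomputable def scoreL {V : Type*} [DecidableEq V] (σ : V → Finset V → ℝ) : List V → Finset V → ℝ
  | [], _ => 0
  | v :: t, D => shat σ v (t.toFinset ∪ D) + scoreL σ t D

noncomputable def sstar {V : Type*} [DecidableEq V] (σ : V → Finset V → ℝ) (A B : Finset V) : ℝ :=
  sSup ((fun l => scoreL σ l B) '' {l : List V | l.Nodup ∧ l.toFinset = A})


lemma shat_mono {V : Type*} [DecidableEq V] (σ : V → Finset V → ℝ) (v : V) {S S' : Finset V}
    (h : S ⊆ S') : shat σ v S ≤ shat σ v S' :=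
  Finset.sup'_le _ _ fun _P hP =>
    Finset.le_sup' _ (Finset.mem_powerset.2 ((Finset.mem_powerset.1 hP).trans h))

lemma exists_leaf {V : Type*} [Fintype V] [DecidableEq V] (T : SimpleGraph V)
    (hforest : T.IsAcyclic) {a b : V} (hab : T.Adj a b) :
    ∃ u c, T.Adj u c ∧ ∀ d, T.Adj u d → d = c := by
  classical
  set S : Set ℕ := {n | ∃ (u v : V) (p : T.Walk u v), p.IsPath ∧ p.length = n} with hS
  have h1 : (1 : ℕ) ∈ S := ⟨a, b, SimpleGraph.Walk.cons hab SimpleGraph.Walk.nil,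
    (SimpleGraph.Path.singleton hab).2, rfl⟩
  have hbdd : BddAbove S := by
    refine ⟨Fintype.card V, fun n hn => ?_⟩
    obtain ⟨u, v, p, hp, rfl⟩ := hn
    exact le_of_lt hp.length_lt
  obtain ⟨u, v, p, hp, hlen⟩ := Nat.sSup_mem ⟨1, h1⟩ hbdd
  have hpos : 0 < p.length := by
    rw [hlen]; exact lt_of_lt_of_le one_pos (le_csSup hbdd h1)
  have hadj : T.Adj u (p.getVert 1) := by
    have := p.adj_getVert_succ (i := 0) hpos
    rwa [p.getVert_zero] at this
  refine ⟨u, p.getVert 1, hadj, fun d hd => ?_⟩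
  by_cases hmem : d ∈ p.support
  · have hq : (p.takeUntil d hmem).IsPath := hp.takeUntil hmem
    have huniq := hforest.path_unique ⟨p.takeUntil d hmem, hq⟩ (SimpleGraph.Path.singleton hd)
    have heq : p.takeUntil d hmem = SimpleGraph.Walk.cons hd SimpleGraph.Walk.nil :=
      congrArg Subtype.val huniq
    have hspec := p.take_spec hmem
    rw [heq] at hspec
    rw [← hspec]
    simp [SimpleGraph.Walk.cons_append]
  · exfalso
    have hq : (SimpleGraph.Walk.cons hd.symm p).IsPath :=
      (SimpleGraph.Walk.cons_isPath_iff _ _).2 ⟨hp, hmem⟩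
    have : (p.length + 1 : ℕ) ∈ S := ⟨d, v, _, hq, by simp⟩
    have hle := le_csSup hbdd this
    rw [hlen] at *
    omega

lemma acyclic_mono' {V : Type*} {T T' : SimpleGraph V} (h : T' ≤ T) (hT : T.IsAcyclic) :
    T'.IsAcyclic := fun _v c hc => hT (c.mapLe h) (hc.mapLe h)

open scoped Classical in
lemma key {V : Type*} [DecidableEq V] [Fintype V] (σ : V → Finset V → ℝ) (F : V → V → ℝ)
    (hF : ∀ i j, F i j = shat σ i {j} + shat σ j ∅ - shat σ i ∅ - shat σ j ∅)
    (hswap : ∀ i j, shat σ i {j} + shat σ j ∅ = shat σ j {i} + shat σ i ∅) :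
    ∀ (n : ℕ) (U : Finset V), U.card = n → ∀ (T : SimpleGraph V),
      T.IsAcyclic → (∀ i j, T.Adj i j → i ∈ U ∧ j ∈ U) → ∀ B : Finset V,
      ∃ l : List V, l.Nodup ∧ l.toFinset = U ∧
        (1/2 : ℝ) * (∑ i : V, ∑ j : V, if T.Adj i j then F i j else 0)
          + ∑ u ∈ U, shat σ u ∅ ≤ scoreL σ l B := by
  classical
  have hFsymm : ∀ i j, F i j = F j i := by
    intro i j
    rw [hF, hF, ← hswap i j]; ring
  intro n
  induction n using Nat.strong_induction_on with
  | _ n IH =>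
    intro U hn T hac hsupp B
    rcases U.eq_empty_or_nonempty with hU | hU
    · refine ⟨[], List.nodup_nil, by simp [hU], ?_⟩
      have hz : ∀ i j : V, ¬ T.Adj i j := by
        intro i j hij
        have := (hsupp i j hij).1
        simp [hU] at this
      simp [scoreL, hU, hz]
    · -- choose the vertex u to put first, with its at-most-one neighbor data
      by_cases hedge : ∃ a b, T.Adj a b
      · obtain ⟨a, b, hab⟩ := hedge
        obtain ⟨u, c, huc, hunique⟩ := exists_leaf T hac hab
        have huU : u ∈ U := (hsupp u c huc).1
        have hcU : c ∈ U := (hsupp u c huc).2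
        have hcu : c ≠ u := fun h => T.irrefl (h ▸ huc)
        -- new graph: delete edges at u
        set T' : SimpleGraph V :=
          { Adj := fun x y => T.Adj x y ∧ x ≠ u ∧ y ≠ u
            symm := ⟨fun x y ⟨h1, h2, h3⟩ => ⟨h1.symm, h3, h2⟩⟩
            loopless := ⟨fun x ⟨h1, _, _⟩ => T.irrefl h1⟩ } with hT'
        have hT'le : T' ≤ T := fun x y h => h.1
        have hT'ac : T'.IsAcyclic := acyclic_mono' hT'le hac
        have hsupp' : ∀ i j, T'.Adj i j → i ∈ U.erase u ∧ j ∈ U.erase u := by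
          intro i j ⟨h1, h2, h3⟩
          exact ⟨Finset.mem_erase.2 ⟨h2, (hsupp i j h1).1⟩,
                 Finset.mem_erase.2 ⟨h3, (hsupp i j h1).2⟩⟩
        have hcard : (U.erase u).card < n := by
          rw [← hn]; exact Finset.card_erase_lt_of_mem huU
        obtain ⟨l', hnd', htf', hle'⟩ :=
          IH (U.erase u).card hcard (U.erase u) rfl T' hT'ac hsupp' B
        refine ⟨u :: l', ?_, ?_, ?_⟩
        · exact List.nodup_cons.2 ⟨by rw [← List.mem_toFinset, htf']; simp, hnd'⟩
        · simp [htf', Finset.insert_erase huU]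
        · -- the sum identity
          have hNu : ∀ i, T.Adj u i ↔ i = c := by
            intro i; exact ⟨fun h => hunique i h, fun h => h ▸ huc⟩
          have hterm : ∀ i : V,
              (∑ j : V, if T.Adj i j then F i j else 0)
                = (∑ j : V, if T'.Adj i j then F i j else 0)
                  + (if i = u then F u c else 0) + (if i = c then F c u else 0) := by
            intro i
            by_cases hiu : i = u
            · subst hiu
              have h1 : ∀ j : V, (if T.Adj i j then F i j else 0) = if j = c then F i c else 0 := by
                intro j
                by_cases h : T.Adj i j
                · rw [if_pos h, if_pos (hunique j h), hunique j h]
                · rw [if_neg h, if_neg]; intro hjc; exact h (hjc ▸ huc)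
              have h2 : ∀ j : V, (if T'.Adj i j then F i j else 0) = 0 := by
                intro j; rw [if_neg]; rintro ⟨_, h, _⟩; exact h rfl
              simp only [h1, h2]
              rw [Finset.sum_ite_eq' Finset.univ c (fun _ => F i c)]
              have : i ≠ c := fun h => hcu h.symm
              simp [this]
            · have h1 : ∀ j : V, (if T'.Adj i j then F i j else 0)
                  = if (T.Adj i j ∧ j ≠ u) then F i j else 0 := by
                intro j
                by_cases h : T.Adj i j ∧ j ≠ u
                · rw [if_pos ⟨h.1, hiu, h.2⟩, if_pos h]
                · rw [if_neg, if_neg h]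
                  rintro ⟨ha, _, hb⟩; exact h ⟨ha, hb⟩
              by_cases hic : i = c
              · subst hic
                simp only [h1, if_neg hiu]
                have hadj_iu : T.Adj i u := huc.symm
                rw [add_zero]
                have : (∑ j : V, if T.Adj i j then F i j else 0)
                    = (∑ j : V, if T.Adj i j ∧ j ≠ u then F i j else 0)
                      + (∑ j : V, if T.Adj i j ∧ j = u then F i j else 0) := by
                  rw [← Finset.sum_add_distrib]
                  refine Finset.sum_congr rfl fun j _ => ?_
                  by_cases h : T.Adj i j
                  · by_cases hju : j = u
                    · simp [h, hju]
                    · simp [h, hju]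
                  · simp [h]
                rw [this]
                congr 1
                have : ∀ j : V, (if T.Adj i j ∧ j = u then F i j else 0)
                    = if j = u then F i u else 0 := by
                  intro j
                  by_cases hju : j = u
                  · subst hju; simp [hadj_iu]
                  · simp [hju]
                simp only [this]
                rw [Finset.sum_ite_eq' Finset.univ u (fun _ => F i u)]
                simp
              · simp only [h1, if_neg hiu, if_neg hic, add_zero]
                refine Finset.sum_congr rfl fun j _ => ?_
                by_cases h : T.Adj i j
                · have hju : j ≠ u := by
                    intro hju; subst hju
                    exact hic (hunique i h.symm)
                  simp [h, hju]
                · simp [h]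
          have hsum : (∑ i : V, ∑ j : V, if T.Adj i j then F i j else 0)
              = (∑ i : V, ∑ j : V, if T'.Adj i j then F i j else 0) + (F u c + F c u) := by
            simp only [hterm]
            rw [Finset.sum_add_distrib, Finset.sum_add_distrib,
              Finset.sum_ite_eq' Finset.univ u (fun _ => F u c),
              Finset.sum_ite_eq' Finset.univ c (fun _ => F c u)]
            simp [add_assoc]
          have hsplit : (∑ v ∈ U, shat σ v ∅)
              = shat σ u ∅ + ∑ v ∈ U.erase u, shat σ v ∅ :=
            (Finset.add_sum_erase U _ huU).symm
          have hshat : shat σ u ∅ + F u c ≤ shat σ u (l'.toFinset ∪ B) := by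
            have h1 : shat σ u ∅ + F u c = shat σ u {c} := by rw [hF]; ring
            rw [h1]
            refine shat_mono σ u ?_
            intro x hx
            rw [Finset.mem_singleton] at hx
            subst hx
            apply Finset.mem_union_left
            rw [htf']
            exact Finset.mem_erase.2 ⟨hcu, hcU⟩
          have : scoreL σ (u :: l') B = shat σ u (l'.toFinset ∪ B) + scoreL σ l' B := rfl
          rw [this, hsum, hsplit, ← hFsymm u c]
          have hring : (1/2 : ℝ) * ((∑ i : V, ∑ j : V, if T'.Adj i j then F i j else 0)
              + (F u c + F u c))
              = (1/2 : ℝ) * (∑ i : V, ∑ j : V, if T'.Adj i j then F i j else 0) + F u c := by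
            ring
          rw [hring]
          have hcomb := add_le_add hshat hle'
          have hle2 : (1/2 : ℝ) * (∑ i : V, ∑ j : V, if T'.Adj i j then F i j else 0)
              + ∑ v ∈ U.erase u, shat σ v ∅ ≤ scoreL σ l' B := by
            have heq : (∑ i : V, ∑ j : V, if T'.Adj i j then F i j else 0)
                = (∑ i : V, ∑ j : V, @ite ℝ (T'.Adj i j) (Classical.propDecidable _) (F i j) 0) :=
              Finset.sum_congr rfl fun i _ => Finset.sum_congr rfl fun j _ => by congr
            rw [heq]; exact hle'
          linarith [hle2, hshat]
      · -- no edges at all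
        push_neg at hedge
        obtain ⟨u, huU⟩ := hU
        have hsupp' : ∀ i j, T.Adj i j → i ∈ U.erase u ∧ j ∈ U.erase u :=
          fun i j hij => absurd hij (hedge i j)
        have hcard : (U.erase u).card < n := by
          rw [← hn]; exact Finset.card_erase_lt_of_mem huU
        obtain ⟨l', hnd', htf', hle'⟩ :=
          IH (U.erase u).card hcard (U.erase u) rfl T hac hsupp' B
        refine ⟨u :: l', ?_, ?_, ?_⟩
        · exact List.nodup_cons.2 ⟨by rw [← List.mem_toFinset, htf']; simp, hnd'⟩
        · simp [htf', Finset.insert_erase huU]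
        · have hsplit : (∑ v ∈ U, shat σ v ∅)
              = shat σ u ∅ + ∑ v ∈ U.erase u, shat σ v ∅ :=
            (Finset.add_sum_erase U _ huU).symm
          have hshat : shat σ u ∅ ≤ shat σ u (l'.toFinset ∪ B) :=
            shat_mono σ u (Finset.empty_subset _)
          have : scoreL σ (u :: l') B = shat σ u (l'.toFinset ∪ B) + scoreL σ l' B := rfl
          rw [this, hsplit]
          linarith [hle', hshat]

/-- Tree lower bound validity: for any acyclic undirected graph T supported on
U ⊆ V, the tree-network score Σ_{{i,j}∈edges(T)} F_{ij} + Σ_{u∈U} ŝ(u,∅) is a lower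
bound on S*(U | V\U). Here F i j = ŝ(i,{j}) + ŝ(j,∅) − ŝ(i,∅) − ŝ(j,∅), assumed
symmetric by pairwise score-equivalence and nonnegative on the edges of T; the sum
over undirected edges is written as half the sum over ordered adjacent pairs. -/
theorem tree_lower_bound {V : Type*} [DecidableEq V] [Fintype V]
    (σ : V → Finset V → ℝ) (U : Finset V)
    (T : SimpleGraph V) [DecidableRel T.Adj] (hforest : T.IsAcyclic)
    (hsupp : ∀ i j : V, T.Adj i j → i ∈ U ∧ j ∈ U)
    (F : V → V → ℝ)
    (hF : ∀ i j : V, F i j = shat σ i {j} + shat σ j ∅ - shat σ i ∅ - shat σ j ∅)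
    (hswap : ∀ i j : V, shat σ i {j} + shat σ j ∅ = shat σ j {i} + shat σ i ∅)
    (hFpos : ∀ i j : V, T.Adj i j → 0 ≤ F i j) :
    (1 / 2 : ℝ) * (∑ i : V, ∑ j ∈ T.neighborFinset i, F i j)
      + ∑ u ∈ U, shat σ u ∅ ≤
    sstar σ U (Finset.univ \ U) := by
  classical
  obtain ⟨l, hnd, htf, hle⟩ := key σ F hF hswap U.card U rfl T hforest hsupp (Finset.univ \ U)
  have hconv : (∑ i : V, ∑ j ∈ T.neighborFinset i, F i j)
      = ∑ i : V, ∑ j : V, @ite ℝ (T.Adj i j) (Classical.propDecidable _) (F i j) 0 := by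
    refine Finset.sum_congr rfl fun i _ => ?_
    rw [SimpleGraph.neighborFinset_eq_filter, Finset.sum_filter]
    exact Finset.sum_congr rfl fun j _ => by congr
  rw [hconv]
  refine le_trans hle (le_csSup ?_ ⟨l, ⟨hnd, htf⟩, rfl⟩)
  apply Set.Finite.bddAbove
  apply Set.Finite.image
  apply Set.Finite.subset (List.finite_length_le V (Fintype.card V))
  intro l hl
  simp only [Set.mem_setOf_eq] at hl ⊢
  calc l.length = l.toFinset.card := (List.toFinset_card_of_nodup hl.1).symm
    _ ≤ Fintype.card V := by rw [hl.2]; exact Finset.card_le_univ U
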